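/- arXiv:1703.04485 — 2 statements merged into one kernel-verified Lean document; each statement's English description precedes it below -/
import Mathlib

section
/- On ℝ², consider μ = δ_{(0,0)}, ν = δ_{(1,0)}, and for n ∈ ℕ, μₙ = μ, νₙ = δ_{(1,0)} + δ_{(1/2 − 1/n, 0)} − δ_{(1/2 + 1/n, 0)}. Then μₙ → μ and νₙ → ν in the flat norm (dual norm of Lipschitz functions vanishing at infinity / with bounded Lipschitz constant), while with φ the Euclidean norm, the optimal transport-type dissipation satisfies D_φ(μ,ν) = 1 and lim_{n→∞} D_φ(μₙ, νₙ) = 1/2. Hence D_φ is not continuous with respect to flat convergence. -/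
noncomputable section

abbrev Pt := EuclideanSpace ℝ (Fin 2)

def pt (a b : ℝ) : Pt := (WithLp.equiv 2 (Fin 2 → ℝ)).symm ![a, b]

/-- The pairing dissipation `D̃` on `ℝ²` (no boundary): infimum over all pairings
(multisets of pairs whose first/second coordinates give back `ν₁`/`ν₂`) of the sum
of the squared Euclidean distances. -/
def Dtilde (ν₁ ν₂ : Multiset Pt) : ℝ :=
  sInf {c | ∃ L : Multiset (Pt × Pt), L.map Prod.fst = ν₁ ∧ L.map Prod.snd = ν₂ ∧
    c = (L.map fun qp => ‖qp.1 - qp.2‖ ^ 2).sum}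

/-- `D_φ` (with `φ` the Euclidean norm) of two signed atomic measures, each represented by
the pair (positive part, negative part) of multisets of atoms. -/
def Dphi (P₁ N₁ P₂ N₂ : Multiset Pt) : ℝ := Dtilde (P₁ + N₂) (P₂ + N₁)

/-- Flat norm of the signed atomic measure with positive part `P` and negative part `N`:
sup of `∫ f dμ` over Lipschitz `f` with `|f| ≤ 1` and `Lip(f) ≤ 1`. -/
def flatNorm (P N : Multiset Pt) : ℝ :=
  sSup {r | ∃ f : Pt → ℝ, LipschitzWith 1 f ∧ (∀ x, |f x| ≤ 1) ∧
    r = ((P.map f).sum - (N.map f).sum)}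

/-! The flat norm only sees the difference of the two measures and is at most `|a - b|` on a
dipole `δ_a - δ_b` (test against a 1-Lipschitz `f`), so `νₙ - ν = δ_{1/2-1/n} - δ_{1/2+1/n}`
has flat norm at most `2/n`. The dissipation, however, may route the atom at the origin to the
new positive atom at `1/2 - 1/n` and the new negative atom to `(1,0)`; of the two pairings of
`{0, 1/2+1/n}` with `{1, 1/2-1/n}` this one is optimal, at cost `2 (1/2 - 1/n)² → 1/2`, whereas
`D_φ(μ, ν) = |0 - 1|² = 1`. -/

theorem Multiset.pair_eq_pair_iff {α : Type*} {a b c d : α} :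
    ({a, b} : Multiset α) = {c, d} ↔ a = c ∧ b = d ∨ a = d ∧ b = c := by
  constructor
  · intro h
    rcases Multiset.cons_eq_cons.mp h with ⟨hac, hbd⟩ | ⟨-, s, hb, hd⟩
    · exact .inl ⟨hac, Multiset.singleton_inj.mp hbd⟩
    · obtain ⟨rfl, rfl⟩ := (Multiset.singleton_eq_cons_iff s).mp hb
      exact .inr ⟨Multiset.singleton_inj.mp hd.symm, rfl⟩
  · rintro (⟨rfl, rfl⟩ | ⟨rfl, rfl⟩)
    · rfl
    · exact Multiset.pair_comm _ _

theorem continuous_pt_left (b : ℝ) : Continuous fun a => pt a b :=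
  (PiLp.continuous_toLp 2 _).comp (by fun_prop)

theorem norm_pt_sub_pt_sq (a b c d : ℝ) : ‖pt a b - pt c d‖ ^ 2 = (a - c) ^ 2 + (b - d) ^ 2 := by
  simp [pt, EuclideanSpace.norm_sq_eq, Fin.sum_univ_two]

theorem Multiset.eq_singleton_of_map_fst_of_map_snd {α β : Type*} {L : Multiset (α × β)} {a : α}
    {b : β} (h₁ : L.map Prod.fst = {a}) (h₂ : L.map Prod.snd = {b}) : L = {(a, b)} := by
  obtain ⟨⟨a₀, b₀⟩, rfl⟩ := Multiset.card_eq_one.mp (by simpa using congrArg Multiset.card h₁)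
  simp only [Multiset.map_singleton, Multiset.singleton_inj] at h₁ h₂
  rw [h₁, h₂]

theorem Multiset.eq_pair_of_map_fst_of_map_snd {α β : Type*} {L : Multiset (α × β)} {a a' : α}
    {b b' : β} (h₁ : L.map Prod.fst = {a, a'}) (h₂ : L.map Prod.snd = {b, b'}) :
    L = {(a, b), (a', b')} ∨ L = {(a, b'), (a', b)} := by
  obtain ⟨⟨a₀, b₀⟩, ⟨a₁, b₁⟩, rfl⟩ :=
    Multiset.card_eq_two.mp (by simpa using congrArg Multiset.card h₁)
  simp only [Multiset.insert_eq_cons, Multiset.map_cons, Multiset.map_singleton] at h₁ h₂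
  rcases Multiset.pair_eq_pair_iff.mp h₁ with ⟨rfl, rfl⟩ | ⟨rfl, rfl⟩ <;>
    rcases Multiset.pair_eq_pair_iff.mp h₂ with ⟨rfl, rfl⟩ | ⟨rfl, rfl⟩
  exacts [.inl rfl, .inr rfl, .inr (Multiset.pair_comm _ _), .inl (Multiset.pair_comm _ _)]

theorem Dtilde_singleton (a b : Pt) : Dtilde {a} {b} = ‖a - b‖ ^ 2 := by
  rw [Dtilde, ← csInf_singleton (‖a - b‖ ^ 2)]
  congr 1
  ext c
  constructor
  · rintro ⟨L, h₁, h₂, rfl⟩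
    simp [Multiset.eq_singleton_of_map_fst_of_map_snd h₁ h₂]
  · rintro rfl
    exact ⟨{(a, b)}, rfl, rfl, by simp⟩

theorem Dtilde_pair (a a' b b' : Pt) :
    Dtilde {a, a'} {b, b'} = min (‖a - b‖ ^ 2 + ‖a' - b'‖ ^ 2) (‖a - b'‖ ^ 2 + ‖a' - b‖ ^ 2) := by
  rw [Dtilde]
  convert csInf_pair (‖a - b‖ ^ 2 + ‖a' - b'‖ ^ 2) (‖a - b'‖ ^ 2 + ‖a' - b‖ ^ 2) using 1
  congr 1
  ext c
  constructor
  · rintro ⟨L, h₁, h₂, rfl⟩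
    rcases Multiset.eq_pair_of_map_fst_of_map_snd h₁ h₂ with rfl | rfl <;> simp
  · rintro (rfl | rfl)
    exacts [⟨{(a, b), (a', b')}, rfl, rfl, by simp⟩,
      ⟨{(a, b'), (a', b)}, rfl, Multiset.pair_comm _ _, by simp⟩]

theorem flatNorm_nonneg (P N : Multiset Pt) : 0 ≤ flatNorm P N := by
  refine le_csSup ⟨Multiset.card P + Multiset.card N, ?_⟩
    ⟨0, (LipschitzWith.const 0).weaken zero_le_one, by simp, by simp⟩
  rintro _ ⟨f, -, hf, rfl⟩
  have hP := Multiset.sum_le_card_nsmul (P.map f) 1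
    (by simpa using fun x _ => (abs_le.mp (hf x)).2)
  have hN := Multiset.card_nsmul_le_sum (s := N.map f) (a := -1)
    (by simpa using fun x _ => (abs_le.mp (hf x)).1)
  simp only [Multiset.card_map, nsmul_eq_mul, mul_one, mul_neg] at hP hN
  linarith

theorem flatNorm_le {P N : Multiset Pt} {c : ℝ}
    (h : ∀ f : Pt → ℝ, LipschitzWith 1 f → (∀ x, |f x| ≤ 1) → (P.map f).sum - (N.map f).sum ≤ c) :
    flatNorm P N ≤ c :=
  csSup_le ⟨0, 0, (LipschitzWith.const 0).weaken zero_le_one, by simp, by simp⟩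
    (by rintro _ ⟨f, hf, hf₁, rfl⟩; exact h f hf hf₁)

theorem flatNorm_self (P : Multiset Pt) : flatNorm P P = 0 :=
  le_antisymm (flatNorm_le fun _ _ _ => (sub_self _).le) (flatNorm_nonneg P P)

theorem flatNorm_add_left (M P N : Multiset Pt) : flatNorm (M + P) (M + N) = flatNorm P N := by
  simp only [flatNorm, Multiset.map_add, Multiset.sum_add, add_sub_add_left_eq_sub]

theorem flatNorm_singleton_le_dist (a b : Pt) : flatNorm {a} {b} ≤ dist a b :=
  flatNorm_le fun f hf _ => by
    simpa [Real.dist_eq] using (le_abs_self (f a - f b)).trans (hf.dist_le_mul a b)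

theorem Dphi_dipole (x : ℝ) :
    Dphi {pt 0 0} 0 {pt 1 0, pt (1/2 - x) 0} {pt (1/2 + x) 0} = 2 * (1/2 - x) ^ 2 := by
  rw [Dphi, Multiset.singleton_add, ← Multiset.insert_eq_cons, add_zero, Dtilde_pair]
  simp only [norm_pt_sub_pt_sq]
  rw [min_eq_right (by nlinarith [sq_nonneg (x + 1/2)])]
  ring

/-- with `μ = δ₍₀,₀₎`, `ν = δ₍₁,₀₎`, `μₙ = μ` and
`νₙ = δ₍₁,₀₎ + δ₍₁/₂₋₁/ₙ,₀₎ − δ₍₁/₂₊₁/ₙ,₀₎`, one has `μₙ → μ`, `νₙ → ν` in the flat norm,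
while `D_φ(μ,ν) = 1` and `D_φ(μₙ,νₙ) → 1/2`: `D_φ` is not flat-continuous. -/
theorem stmt_4 :
    Filter.Tendsto
      (fun _ : ℕ => flatNorm (({pt 0 0} : Multiset Pt) + 0) (0 + ({pt 0 0} : Multiset Pt)))
      Filter.atTop (nhds 0) ∧
    Filter.Tendsto
      (fun n : ℕ => flatNorm
        (({pt 1 0, pt (1/2 - (n : ℝ)⁻¹) 0} : Multiset Pt) + 0)
        (({pt (1/2 + (n : ℝ)⁻¹) 0} : Multiset Pt) + ({pt 1 0} : Multiset Pt)))
      Filter.atTop (nhds 0) ∧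
    Dphi ({pt 0 0} : Multiset Pt) 0 ({pt 1 0} : Multiset Pt) 0 = 1 ∧
    Filter.Tendsto
      (fun n : ℕ => Dphi ({pt 0 0} : Multiset Pt) 0
        ({pt 1 0, pt (1/2 - (n : ℝ)⁻¹) 0} : Multiset Pt)
        ({pt (1/2 + (n : ℝ)⁻¹) 0} : Multiset Pt))
      Filter.atTop (nhds (1/2)) := by
  have hinv : Filter.Tendsto (fun n : ℕ => (n : ℝ)⁻¹) Filter.atTop (nhds 0) :=
    tendsto_inv_atTop_zero.comp tendsto_natCast_atTop_atTop
  refine ⟨?_, ?_, ?_, ?_⟩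
  · simpa only [add_zero, zero_add, flatNorm_self] using tendsto_const_nhds
  · have hdist :
        Filter.Tendsto (fun x => dist (pt (1/2 - x) 0) (pt (1/2 + x) 0)) (nhds 0) (nhds 0) :=
      (((continuous_pt_left 0).comp (by fun_prop)).dist
        ((continuous_pt_left 0).comp (by fun_prop))).tendsto' 0 0 (by simp)
    refine squeeze_zero (fun _ => flatNorm_nonneg _ _) (fun n => ?_) (hdist.comp hinv)
    rw [add_zero, add_comm, Multiset.insert_eq_cons, ← Multiset.singleton_add, flatNorm_add_left]
    exact flatNorm_singleton_le_dist _ _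
  · simp [Dphi, Dtilde_singleton, norm_pt_sub_pt_sq]
  · simp only [Dphi_dipole]
    exact ((by fun_prop : Continuous fun x : ℝ => 2 * (1/2 - x) ^ 2).tendsto' 0 (1/2)
      (by norm_num)).comp hinv

end
end

section
/- Let K ⊂ ℝ^N be compact, F : K → (subsets of ℝ^N) an upper semicontinuous set-valued map with nonempty, closed, bounded, convex values, and let x^τ : [0,T] → K be a sequence of absolutely continuous τ-solutions of ẋ ∈ F(x), meaning ẋ^τ(t) ∈ ⋃_{s ∈ [t−τ,t+τ]} {ξ : dist(ξ, F(x^τ(s))) ≤ τ} for a.e. t, converging uniformly as τ → 0 to x : [0,T] → K with x^τ uniformly Lipschitz. Then x is Lipschitz and satisfies ẋ(t) ∈ F(x(t)) for a.e. t ∈ [0,T]. -/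
/-!
Fix a time `t` at which the Lipschitz limit `x` is differentiable, and `ε > 0`. By upper
semicontinuity, `F` is `ε`-close to `F (x t)` near `x t`; since the `xₙ` are uniformly Lipschitz
and converge to `x`, for `u > t` close to `t` and `n` large the derivative of `xₙ` lies, a.e. on
`(t, u)`, in the closed convex set `C = cthickening 2ε (F (x t))`. A Lipschitz function whose
derivative lies a.e. in a closed convex set has its difference quotients in that set (separate by
a linear functional and integrate the derivative), so `slope xₙ t u ∈ C`. Letting `n → ∞`, then
`u → t`, gives `ẋ t ∈ C` for every `ε`, hence `ẋ t ∈ F (x t)`.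
-/

open Set Filter Metric MeasureTheory Topology

/-- `y` is a `τ`-solution of `ẏ ∈ F(y)` on `[0, T]`. -/
def IsApproxSolution {E : Type*} [NormedAddCommGroup E] [NormedSpace ℝ E] (F : E → Set E)
    (T τ : ℝ) (y : ℝ → E) : Prop :=
  ∀ᵐ t : ℝ, t ∈ Icc 0 T → ∃ v, HasDerivAt y v t ∧
    ∃ s ∈ Icc (t - τ) (t + τ) ∩ Icc 0 T, infDist v (F (y s)) ≤ τ

theorem LipschitzOnWith.of_tendsto {ι α β : Type*} [PseudoMetricSpace α] [PseudoMetricSpace β]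
    {l : Filter ι} [l.NeBot] {f : ι → α → β} {g : α → β} {K : NNReal} {s : Set α}
    (hf : ∀ᶠ i in l, LipschitzOnWith K (f i) s)
    (hlim : ∀ x ∈ s, Tendsto (fun i => f i x) l (𝓝 (g x))) : LipschitzOnWith K g s :=
  LipschitzOnWith.of_dist_le_mul fun x hx y hy =>
    le_of_tendsto ((hlim x hx).dist (hlim y hy)) (hf.mono fun _ hi => hi.dist_le_mul x hx y hy)

theorem LipschitzOnWith.sub_le_mul_of_ae_hasDerivAt_le {f : ℝ → ℝ} {K : NNReal} {a b M : ℝ}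
    (hab : a ≤ b) (hf : LipschitzOnWith K f (Icc a b))
    (hd : ∀ᵐ s, s ∈ Ioo a b → ∃ d, HasDerivAt f d s ∧ d ≤ M) :
    f b - f a ≤ M * (b - a) := by
  have hac : AbsolutelyContinuousOnInterval f a b :=
    (uIcc_of_le hab ▸ hf).absolutelyContinuousOnInterval
  have hderiv : deriv f ≤ᵐ[volume.restrict (Icc a b)] fun _ => M := by
    rw [← Measure.restrict_congr_set Ioo_ae_eq_Icc, EventuallyLE,
      ae_restrict_iff' measurableSet_Ioo]
    filter_upwards [hd] with s hs hsI
    obtain ⟨d, hfd, hdM⟩ := hs hsI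
    rwa [hfd.deriv]
  calc f b - f a = ∫ s in a..b, deriv f s := hac.integral_deriv_eq_sub.symm
    _ ≤ ∫ _ in a..b, M :=
      intervalIntegral.integral_mono_ae_restrict hab hac.intervalIntegrable_deriv
        intervalIntegrable_const hderiv
    _ = M * (b - a) := by simp [mul_comm]

theorem mem_cthickening_add_of_infDist_le {α : Type*} [PseudoMetricSpace α] {A B : Set α} {v : α}
    {τ ε : ℝ} (hA : A.Nonempty) (hAB : A ⊆ thickening ε B) (hv : infDist v A ≤ τ) (hε : 0 ≤ ε) :
    v ∈ cthickening (τ + ε) B := by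
  have hτ : 0 ≤ τ := infDist_nonneg.trans hv
  have hvA : v ∈ cthickening τ A := by
    rw [mem_cthickening_iff, ← ENNReal.ofReal_toReal (infEDist_ne_top hA)]
    exact ENNReal.ofReal_le_ofReal hv
  exact cthickening_cthickening_subset hτ hε B
    (cthickening_subset_of_subset τ (hAB.trans (thickening_subset_cthickening ε B)) hvA)

section

variable {E : Type*} [NormedAddCommGroup E] [NormedSpace ℝ E]

/-- Mean value inclusion: a separating functional reduces it to the scalar estimate above. -/
theorem slope_mem_of_ae_hasDerivAt_mem {g : ℝ → E} {C : Set E} {K : NNReal} {a b : ℝ}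
    (hC : Convex ℝ C) (hCc : IsClosed C) (hab : a < b) (hg : LipschitzOnWith K g (Icc a b))
    (hder : ∀ᵐ s, s ∈ Ioo a b → ∃ v, HasDerivAt g v s ∧ v ∈ C) :
    slope g a b ∈ C := by
  by_contra hmem
  obtain ⟨φ, u, hφC, hφ⟩ := geometric_hahn_banach_closed_point hC hCc hmem
  have hφg : φ (g b) - φ (g a) ≤ u * (b - a) := by
    refine (φ.lipschitz.comp_lipschitzOnWith hg).sub_le_mul_of_ae_hasDerivAt_le hab.le ?_
    filter_upwards [hder] with s hs hsI
    obtain ⟨v, hgv, hvC⟩ := hs hsI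
    exact ⟨φ v, φ.hasFDerivAt.comp_hasDerivAt s hgv, (hφC v hvC).le⟩
  rw [slope_def_module, map_smul, map_sub, smul_eq_mul, lt_inv_mul_iff₀ (sub_pos.2 hab)] at hφ
  linarith

theorem slope_mem_of_tendsto {ι : Type*} {l : Filter ι} [l.NeBot] {g : ι → ℝ → E} {f : ℝ → E}
    {C : Set E} {K : NNReal} {a b : ℝ} (hC : Convex ℝ C) (hCc : IsClosed C) (hab : a < b)
    (ha : Tendsto (fun i => g i a) l (𝓝 (f a))) (hb : Tendsto (fun i => g i b) l (𝓝 (f b)))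
    (hg : ∀ᶠ i in l, LipschitzOnWith K (g i) (Icc a b) ∧
      ∀ᵐ s, s ∈ Ioo a b → ∃ v, HasDerivAt (g i) v s ∧ v ∈ C) :
    slope f a b ∈ C := by
  have hslope : Tendsto (fun i => slope (g i) a b) l (𝓝 (slope f a b)) := by
    simp only [slope_def_module]
    exact (hb.sub ha).const_smul _
  exact hCc.mem_of_tendsto hslope
    (hg.mono fun i hi => slope_mem_of_ae_hasDerivAt_mem hC hCc hab hi.1 hi.2)

theorem HasDerivAt.mem_of_eventually_slope_mem_cthickening {f : ℝ → E} {v : E} {t : ℝ}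
    {A : Set E} (hf : HasDerivAt f v t) (hA : IsClosed A)
    (h : ∀ ε > 0, ∀ᶠ u in 𝓝[>] t, slope f t u ∈ cthickening ε A) : v ∈ A := by
  have hslope : Tendsto (slope f t) (𝓝[>] t) (𝓝 v) :=
    (hasDerivAt_iff_tendsto_slope.1 hf).mono_left (nhdsWithin_mono _ fun _ hu => ne_of_gt hu)
  rw [← hA.closure_eq, closure_eq_iInter_cthickening, mem_iInter₂]
  exact fun ε hε => isClosed_cthickening.mem_of_tendsto hslope (h ε hε)

theorem eventually_slope_mem_cthickening_of_isApproxSolution {K : Set E} {F : E → Set E}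
    {T : ℝ} {L : NNReal} {τs : ℕ → ℝ} {xs : ℕ → ℝ → E} {x : ℝ → E} {t ε δ : ℝ}
    (hFne : ∀ y ∈ K, (F y).Nonempty) (hFcvx : Convex ℝ (F (x t)))
    (hδF : ∀ y ∈ K, dist y (x t) < δ → F y ⊆ thickening ε (F (x t)))
    (hε : 0 < ε) (hδ : 0 < δ) (hτ0 : Tendsto τs atTop (𝓝 0))
    (hLip : ∀ n, LipschitzOnWith L (xs n) (Icc 0 T)) (hmem : ∀ n, ∀ s ∈ Icc 0 T, xs n s ∈ K)
    (hsol : ∀ n, IsApproxSolution F T (τs n) (xs n))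
    (hlim : ∀ s ∈ Icc 0 T, Tendsto (fun n => xs n s) atTop (𝓝 (x s))) (ht : t ∈ Ico 0 T) :
    ∀ᶠ u in 𝓝[>] t, slope x t u ∈ cthickening (ε + ε) (F (x t)) := by
  have hLu : Tendsto (fun u => (L : ℝ) * (u - t)) (𝓝 t) (𝓝 0) := by
    simpa using ((tendsto_id (x := 𝓝 t)).sub_const t).const_mul (L : ℝ)
  have hLτ : Tendsto (fun n => (L : ℝ) * τs n) atTop (𝓝 0) := by
    simpa using hτ0.const_mul (L : ℝ)
  have hu : ∀ᶠ u in 𝓝[>] t, u ≤ T ∧ L * (u - t) < δ / 3 :=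
    eventually_nhdsWithin_of_eventually_nhds
      ((eventually_le_nhds ht.2).and (hLu.eventually (eventually_lt_nhds (by positivity))))
  filter_upwards [hu, self_mem_nhdsWithin] with u ⟨huT, huδ⟩ (htu : t < u)
  have hτ : ∀ᶠ n in atTop, τs n ≤ ε ∧ L * τs n < δ / 3 :=
    (hτ0.eventually (eventually_le_nhds hε)).and
      (hLτ.eventually (eventually_lt_nhds (by positivity)))
  have hxt : ∀ᶠ n in atTop, dist (xs n t) (x t) < δ / 3 :=
    Metric.tendsto_nhds.1 (hlim t (Ico_subset_Icc_self ht)) _ (by positivity)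
  have htuT : Icc t u ⊆ Icc 0 T := Icc_subset_Icc ht.1 huT
  refine slope_mem_of_tendsto (K := L) (hFcvx.cthickening _) isClosed_cthickening htu
    (hlim t (htuT (left_mem_Icc.2 htu.le))) (hlim u (htuT (right_mem_Icc.2 htu.le))) ?_
  filter_upwards [hτ, hxt] with n ⟨hτε, hτδ⟩ hn
  refine ⟨(hLip n).mono htuT, ?_⟩
  filter_upwards [hsol n] with s hs hsI
  obtain ⟨v, hv, s', ⟨⟨hs's, hss'⟩, hs'T⟩, hinf⟩ := hs (htuT (Ioo_subset_Icc_self hsI))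
  refine ⟨v, hv, ?_⟩
  have hs't : dist s' t ≤ τs n + (u - t) := by
    rw [Real.dist_eq, abs_le]
    constructor <;> linarith [hsI.1, hsI.2]
  have hclose : dist (xs n s') (x t) < δ :=
    calc dist (xs n s') (x t) ≤ dist (xs n s') (xs n t) + dist (xs n t) (x t) :=
          dist_triangle _ _ _
      _ ≤ L * dist s' t + dist (xs n t) (x t) := by
          gcongr
          exact (hLip n).dist_le_mul s' hs'T t (Ico_subset_Icc_self ht)
      _ ≤ L * (τs n + (u - t)) + dist (xs n t) (x t) := by gcongr
      _ < δ := by linarith [mul_add (L : ℝ) (τs n) (u - t)]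
  have hs'K : xs n s' ∈ K := hmem n s' hs'T
  exact cthickening_mono (by linarith) _
    (mem_cthickening_add_of_infDist_le (hFne _ hs'K) (hδF _ hs'K hclose) hinf hε.le)

end

theorem stmt_12_general {N : ℕ} (K : Set (EuclideanSpace ℝ (Fin N))) (hK : IsCompact K)
    (F : EuclideanSpace ℝ (Fin N) → Set (EuclideanSpace ℝ (Fin N)))
    (hF : ∀ x ∈ K, (F x).Nonempty ∧ IsClosed (F x) ∧ Bornology.IsBounded (F x) ∧
      Convex ℝ (F x))
    (husc : ∀ x ∈ K, ∀ ε : ℝ, 0 < ε → ∃ δ : ℝ, 0 < δ ∧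
      ∀ y ∈ K, dist y x < δ → F y ⊆ Metric.thickening ε (F x))
    (T : ℝ) (L : NNReal)
    (τs : ℕ → ℝ)
    (hτ0 : Filter.Tendsto τs Filter.atTop (nhds 0))
    (xs : ℕ → ℝ → EuclideanSpace ℝ (Fin N))
    (hLip : ∀ n, LipschitzOnWith L (xs n) (Set.Icc 0 T))
    (hmem : ∀ n, ∀ t ∈ Set.Icc 0 T, xs n t ∈ K)
    (hsol : ∀ n, ∀ᵐ t : ℝ, t ∈ Set.Icc 0 T →
      ∃ v, HasDerivAt (xs n) v t ∧
        ∃ s ∈ Set.Icc (t - τs n) (t + τs n) ∩ Set.Icc 0 T,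
          Metric.infDist v (F (xs n s)) ≤ τs n)
    (x : ℝ → EuclideanSpace ℝ (Fin N))
    (hconv : TendstoUniformlyOn xs x Filter.atTop (Set.Icc 0 T)) :
    LipschitzOnWith L x (Set.Icc 0 T) ∧
    ∀ᵐ t : ℝ, t ∈ Set.Icc 0 T → ∃ v, HasDerivAt x v t ∧ v ∈ F (x t) := by
  have hlim : ∀ s ∈ Icc 0 T, Tendsto (fun n => xs n s) atTop (𝓝 (x s)) :=
    fun s hs => hconv.tendsto_at hs
  have hxLip : LipschitzOnWith L x (Icc 0 T) := .of_tendsto (.of_forall hLip) hlim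
  have hxK : ∀ s ∈ Icc 0 T, x s ∈ K := fun s hs =>
    hK.isClosed.mem_of_tendsto (hlim s hs) (.of_forall fun n => hmem n s hs)
  refine ⟨hxLip, ?_⟩
  filter_upwards [hxLip.ae_differentiableWithinAt_of_mem_real,
    ((countable_singleton T).insert 0).ae_notMem volume] with t hdiff hend ht
  rw [mem_insert_iff, mem_singleton_iff, not_or] at hend
  have htT : t ∈ Ioo 0 T := ⟨ht.1.lt_of_ne' hend.1, ht.2.lt_of_ne hend.2⟩
  have hx : HasDerivAt x (deriv x t) t :=
    ((hdiff ht).differentiableAt (Icc_mem_nhds htT.1 htT.2)).hasDerivAt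
  obtain ⟨-, hFcl, -, hFcvx⟩ := hF (x t) (hxK t ht)
  refine ⟨_, hx, hx.mem_of_eventually_slope_mem_cthickening hFcl fun ε hε => ?_⟩
  obtain ⟨δ, hδ, hδF⟩ := husc (x t) (hxK t ht) (ε / 2) (half_pos hε)
  simpa only [add_halves] using eventually_slope_mem_cthickening_of_isApproxSolution
    (fun y hy => (hF y hy).1) hFcvx hδF (half_pos hε) hδ hτ0 hLip hmem hsol hlim
    (Ioo_subset_Ico_self htT)

/-- Filippov: a uniform limit of uniformly Lipschitz `τ`-solutions of the
differential inclusion `ẋ ∈ F(x)`, with `F` upper semicontinuous with nonempty closed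
bounded convex values on a compact set `K`, is a Lipschitz solution of `ẋ(t) ∈ F(x(t))`
for a.e. `t ∈ [0,T]`. -/
theorem stmt_12 {N : ℕ} (K : Set (EuclideanSpace ℝ (Fin N))) (hK : IsCompact K)
    (F : EuclideanSpace ℝ (Fin N) → Set (EuclideanSpace ℝ (Fin N)))
    (hF : ∀ x ∈ K, (F x).Nonempty ∧ IsClosed (F x) ∧ Bornology.IsBounded (F x) ∧
      Convex ℝ (F x))
    (husc : ∀ x ∈ K, ∀ ε : ℝ, 0 < ε → ∃ δ : ℝ, 0 < δ ∧
      ∀ y ∈ K, dist y x < δ → F y ⊆ Metric.thickening ε (F x))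
    (T : ℝ) (hT : 0 < T) (L : NNReal)
    (τs : ℕ → ℝ) (hτpos : ∀ n, 0 < τs n)
    (hτ0 : Filter.Tendsto τs Filter.atTop (nhds 0))
    (xs : ℕ → ℝ → EuclideanSpace ℝ (Fin N))
    (hLip : ∀ n, LipschitzOnWith L (xs n) (Set.Icc 0 T))
    (hmem : ∀ n, ∀ t ∈ Set.Icc 0 T, xs n t ∈ K)
    (hsol : ∀ n, ∀ᵐ t : ℝ, t ∈ Set.Icc 0 T →
      ∃ v, HasDerivAt (xs n) v t ∧
        ∃ s ∈ Set.Icc (t - τs n) (t + τs n) ∩ Set.Icc 0 T,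
          Metric.infDist v (F (xs n s)) ≤ τs n)
    (x : ℝ → EuclideanSpace ℝ (Fin N))
    (hconv : TendstoUniformlyOn xs x Filter.atTop (Set.Icc 0 T)) :
    LipschitzOnWith L x (Set.Icc 0 T) ∧
    ∀ᵐ t : ℝ, t ∈ Set.Icc 0 T → ∃ v, HasDerivAt x v t ∧ v ∈ F (x t) :=
  stmt_12_general K hK F hF husc T L τs hτ0 xs hLip hmem hsol x hconv
end
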